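/- arXiv:1509.01087 — 3 statements merged into one kernel-verified Lean document; each statement's English description precedes it below -/
import Mathlib

section
/- Let f : G → H be a group homomorphism of abelian groups such that H is torsion-free, G is divisible, and there exist homomorphisms u : G → K, v : K → G with v ∘ u = χ·id_G for a nonzero integer χ, and ker(f) ⊆ ker(u). Then f is injective. -/
/-- Let `f : G → H` be a homomorphism of abelian groups such that `H` is
torsion-free and `G` is divisible, and suppose there are homomorphisms `u : G → K`,
`v : K → G` with `v ∘ u = χ·id_G` for a nonzero integer `χ` and `ker f ⊆ ker u`.
Then `f` is injective. -/
theorem injective_of_divisible_torsionFree_retraction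
    {G H K : Type*} [AddCommGroup G] [AddCommGroup H] [AddCommGroup K]
    (f : G →+ H) (u : G →+ K) (v : K →+ G) (χ : ℤ) (hχ : χ ≠ 0)
    (hcomp : ∀ x : G, v (u x) = χ • x)
    (htf : ∀ (n : ℤ) (x : H), n ≠ 0 → n • x = 0 → x = 0)
    (hdiv : ∀ n : ℕ, 1 ≤ n → ∀ x : G, ∃ y, n • y = x)
    (hker : (f.ker : Set G) ⊆ (u.ker : Set G)) :
    Function.Injective f := by
  rw [injective_iff_map_eq_zero]
  intro x hx
  obtain ⟨y, hy⟩ := hdiv χ.natAbs (Int.natAbs_pos.mpr hχ) x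
  have hn : (χ.natAbs : ℤ) ≠ 0 := Int.natCast_ne_zero.mpr (Int.natAbs_ne_zero.mpr hχ)
  have hfy : f y = 0 := by
    apply htf (χ.natAbs : ℤ) _ hn
    rw [natCast_zsmul, ← map_nsmul, hy, hx]
  have huy : u y = 0 := hker (show y ∈ f.ker from AddMonoidHom.mem_ker.mpr hfy)
  have hχy : χ • y = 0 := by rw [← hcomp, huy, map_zero]
  have : (χ.natAbs : ℤ) • y = 0 := by
    rcases Int.natAbs_eq χ with h | h
    · rw [← h, hχy]
    · rw [show ((χ.natAbs : ℤ)) = -χ from by omega, neg_zsmul, hχy, neg_zero]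
  rw [← hy, ← natCast_zsmul, this]
end

section
/- Let F be a finite field. Then the Milnor K-group K^M_n(F) is trivial for all n ≥ 2. -/
open FreeAbelianGroup

/-- The subgroup of relations defining Milnor K-theory of a commutative ring `A`:
multilinearity in each slot and the Steinberg relation `{…,x,…,y,…} = 0` whenever
`x + y = 1` in `A`. -/
def MilnorRel (A : Type*) [CommRing A] (n : ℕ) :
    AddSubgroup (FreeAbelianGroup (Fin n → Aˣ)) :=
  AddSubgroup.closure
    ({r | ∃ (x : Fin n → Aˣ) (i : Fin n) (a b : Aˣ),
        r = of (Function.update x i (a * b)) - of (Function.update x i a) -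
            of (Function.update x i b)} ∪
     {r | ∃ x : Fin n → Aˣ,
        (∃ i j : Fin n, i ≠ j ∧ (x i : A) + (x j : A) = 1) ∧ r = of x})

/-- The `n`-th Milnor K-group of a commutative ring `A`: the free abelian group on
`n`-tuples of units modulo multilinearity and the Steinberg relations. -/
def MilnorK (A : Type*) [CommRing A] (n : ℕ) : Type _ :=
  FreeAbelianGroup (Fin n → Aˣ) ⧸ MilnorRel A n

instance (A : Type*) [CommRing A] (n : ℕ) : AddCommGroup (MilnorK A n) :=
  QuotientAddGroup.Quotient.addCommGroup _

/-- The symbol `{x₁,…,xₙ}` in the Milnor K-group. -/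
def MilnorK.symbol {A : Type*} [CommRing A] {n : ℕ} (x : Fin n → Aˣ) : MilnorK A n :=
  QuotientAddGroup.mk (of x)

namespace MilnorKAux

variable {A : Type*} [CommRing A] {n : ℕ}

lemma symbol_mul (x : Fin n → Aˣ) (i : Fin n) (a b : Aˣ) :
    MilnorK.symbol (Function.update x i (a * b)) =
      MilnorK.symbol (Function.update x i a) + MilnorK.symbol (Function.update x i b) := by
  have h : of (Function.update x i (a * b)) - of (Function.update x i a) -
      of (Function.update x i b) ∈ MilnorRel A n :=
    AddSubgroup.subset_closure (Or.inl ⟨x, i, a, b, rfl⟩)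
  have h2 : (QuotientAddGroup.mk (of (Function.update x i (a * b)) -
      of (Function.update x i a) - of (Function.update x i b)) : MilnorK A n) = 0 :=
    (QuotientAddGroup.eq_zero_iff _).2 h
  rw [QuotientAddGroup.mk_sub, QuotientAddGroup.mk_sub, sub_sub, sub_eq_zero] at h2
  exact h2

lemma symbol_steinberg (x : Fin n → Aˣ) (i j : Fin n) (hij : i ≠ j)
    (h : (x i : A) + (x j : A) = 1) : MilnorK.symbol x = 0 :=
  (QuotientAddGroup.eq_zero_iff _).2 <|
    AddSubgroup.subset_closure (Or.inr ⟨x, ⟨i, j, hij, h⟩, rfl⟩)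

/-- Two-slot symbol with the other slots fixed by `x`. -/
def s2 (x : Fin n → Aˣ) (i j : Fin n) (u v : Aˣ) : MilnorK A n :=
  MilnorK.symbol (Function.update (Function.update x i u) j v)

variable (x : Fin n → Aˣ) (i j : Fin n)

lemma s2_swap (hij : i ≠ j) (u v : Aˣ) : s2 x i j u v = s2 x j i v u := by
  unfold s2
  rw [Function.update_comm hij]

lemma s2_mul_right (u v w : Aˣ) :
    s2 x i j u (v * w) = s2 x i j u v + s2 x i j u w :=
  symbol_mul (Function.update x i u) j v w

lemma s2_mul_left (hij : i ≠ j) (u v w : Aˣ) :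
    s2 x i j (u * v) w = s2 x i j u w + s2 x i j v w := by
  rw [s2_swap x i j hij, s2_swap x i j hij u, s2_swap x i j hij v]
  exact s2_mul_right x j i w u v

lemma s2_one_right (u : Aˣ) : s2 x i j u 1 = 0 := by
  have h := s2_mul_right x i j u 1 1
  rw [mul_one] at h
  exact left_eq_add.mp h

lemma s2_one_left (hij : i ≠ j) (v : Aˣ) : s2 x i j 1 v = 0 := by
  rw [s2_swap x i j hij]; exact s2_one_right x j i v

lemma s2_inv_left (hij : i ≠ j) (u v : Aˣ) : s2 x i j u⁻¹ v = - s2 x i j u v := by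
  have h := s2_mul_left x i j hij u u⁻¹ v
  rw [mul_inv_cancel, s2_one_left x i j hij] at h
  linear_combination (norm := abel) -h

lemma s2_inv_right (hij : i ≠ j) (u v : Aˣ) : s2 x i j u v⁻¹ = - s2 x i j u v := by
  rw [s2_swap x i j hij, s2_swap x i j hij u]
  exact s2_inv_left x j i hij.symm v u

lemma s2_pow_left (hij : i ≠ j) (g v : Aˣ) (k : ℕ) :
    s2 x i j (g ^ k) v = k • s2 x i j g v := by
  induction k with
  | zero => simpa using s2_one_left x i j hij v
  | succ m ih =>
      rw [pow_succ, s2_mul_left x i j hij, ih, succ_nsmul]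

lemma s2_zpow_left (hij : i ≠ j) (g v : Aˣ) (k : ℤ) :
    s2 x i j (g ^ k) v = k • s2 x i j g v := by
  cases k with
  | ofNat m => simpa using s2_pow_left x i j hij g v m
  | negSucc m =>
      rw [zpow_negSucc, s2_inv_left x i j hij, s2_pow_left x i j hij]
      simp [negSucc_zsmul]

lemma s2_zpow_right (hij : i ≠ j) (g u : Aˣ) (k : ℤ) :
    s2 x i j u (g ^ k) = k • s2 x i j u g := by
  rw [s2_swap x i j hij, s2_swap x i j hij u]
  exact s2_zpow_left x j i hij.symm g u k

lemma s2_steinberg (hij : i ≠ j) (u v : Aˣ) (h : (u : A) + (v : A) = 1) :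
    s2 x i j u v = 0 := by
  apply symbol_steinberg _ i j hij
  rw [Function.update_of_ne hij, Function.update_self, Function.update_self]
  exact h

end MilnorKAux

section Field
open MilnorKAux

variable {F : Type*} [Field F] {n : ℕ}

lemma s2_neg_self (x : Fin n → Fˣ) (i j : Fin n) (hij : i ≠ j) (u : Fˣ) :
    s2 x i j u (-u) = 0 := by
  by_cases hu : u = 1
  · subst hu
    exact s2_one_left x i j hij (-1)
  · have hu0 : (u : F) ≠ 0 := Units.ne_zero u
    have hu' : (u : F) ≠ 1 := fun h => hu (Units.ext h)
    have h1 : (1 : F) - u ≠ 0 := sub_ne_zero.mpr (Ne.symm hu')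
    have h2 : (1 : F) - ((u : F))⁻¹ ≠ 0 := by
      rw [sub_ne_zero]
      intro h
      apply hu'
      rw [eq_comm, inv_eq_one_div, eq_comm, eq_div_iff hu0, one_mul] at h
      exact h
    set a : Fˣ := Units.mk0 _ h1 with ha
    set b : Fˣ := Units.mk0 _ h2 with hb
    have key : -u = a * b⁻¹ := by
      apply Units.ext
      rw [Units.val_mul, ha, hb]
      simp only [Units.val_mk0, Units.val_inv_eq_inv_val, Units.val_neg]
      rw [eq_mul_inv_iff_mul_eq₀ h2]
      field_simp
      ring
    rw [key, s2_mul_right, s2_inv_right x i j hij]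
    have hsa : s2 x i j u a = 0 := by
      apply s2_steinberg x i j hij
      simp [ha]
    have hsb : s2 x i j u b = 0 := by
      have h3 := s2_inv_left x i j hij u b
      have h0 : s2 x i j u⁻¹ b = 0 := by
        apply s2_steinberg x i j hij
        simp [hb, Units.val_inv_eq_inv_val]
      rw [h0] at h3
      exact neg_eq_zero.mp h3.symm
    rw [hsa, hsb]
    simp

lemma s2_self_two (x : Fin n → Fˣ) (i j : Fin n) (hij : i ≠ j) (u : Fˣ) :
    s2 x i j u u + s2 x i j u u = 0 := by
  have h0 : s2 x i j (u * u) (-(u * u)) = 0 := s2_neg_self x i j hij (u * u)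
  have hneg : (-(u * u) : Fˣ) = (-u) * u := (neg_mul u u).symm
  rw [hneg, s2_mul_left x i j hij, s2_mul_right] at h0
  have h1 : s2 x i j u (-u) = 0 := s2_neg_self x i j hij u
  rw [h1, zero_add] at h0
  exact h0

end Field


open MilnorKAux in
lemma s2_gen_zero {F : Type*} [Field F] [Fintype F] {n : ℕ} (x : Fin n → Fˣ)
    (i j : Fin n) (hij : i ≠ j) (g : Fˣ) (hg : ∀ u : Fˣ, u ∈ Subgroup.zpowers g) :
    s2 x i j g g = 0 := by
  classical
  set S := s2 x i j g g with hSdef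
  have h2S : S + S = 0 := s2_self_two x i j hij g
  by_cases hchar : ringChar F = 2
  · haveI : CharP F 2 := hchar ▸ ringChar.charP F
    have hng : (-g : Fˣ) = g := Units.ext (by rw [Units.val_neg, CharTwo.neg_eq])
    have hns := s2_neg_self x i j hij g
    rwa [hng] at hns
  · -- odd characteristic
    have hcardodd : Fintype.card F % 2 = 1 := FiniteField.odd_card_of_char_ne_two hchar
    have horder : orderOf g = Fintype.card Fˣ := by
      rw [orderOf_eq_card_of_forall_mem_zpowers hg, Nat.card_eq_fintype_card]
    have hcardu : Fintype.card Fˣ = Fintype.card F - 1 := Fintype.card_units (α := F)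
    have hcard2 : 2 ≤ Fintype.card F := Fintype.one_lt_card
    have hordeven : 2 ∣ orderOf g := by omega
    -- g is not a square
    have hnsq : ∀ e : F, (g : F) ≠ e ^ 2 := by
      intro e he
      have he0 : e ≠ 0 := by
        intro h
        rw [h] at he
        simp at he
      set eu : Fˣ := Units.mk0 e he0 with heu
      have hgeu : g = eu ^ 2 := Units.ext (by simp [heu, he])
      obtain ⟨m, hm⟩ := Subgroup.mem_zpowers_iff.mp (hg eu)
      have hpow : g ^ (2 * m - 1 : ℤ) = 1 := by
        have : g = g ^ (2 * m : ℤ) := by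
          rw [two_mul, zpow_add, hm, ← sq, ← hgeu]
        calc g ^ (2 * m - 1 : ℤ) = g ^ (2 * m : ℤ) * g ^ (-1 : ℤ) := by
              rw [← zpow_add]; ring_nf
          _ = g * g⁻¹ := by rw [← this, zpow_neg_one]
          _ = 1 := mul_inv_cancel g
      have hdvd : (orderOf g : ℤ) ∣ 2 * m - 1 := orderOf_dvd_iff_zpow_eq_one.mpr hpow
      have h2dvd : (2 : ℤ) ∣ 2 * m - 1 := by
        exact dvd_trans (Int.natCast_dvd_natCast.mpr hordeven) hdvd
      omega
    -- g is a sum of two squares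
    obtain ⟨c, d, hcd⟩ := FiniteField.exists_root_sum_quadratic
      (f := (Polynomial.X ^ 2 - Polynomial.C (g : F))) (g := (Polynomial.X ^ 2 : Polynomial F))
      (Polynomial.degree_X_pow_sub_C (by norm_num) _) (Polynomial.degree_X_pow 2) hcardodd
    simp only [Polynomial.eval_sub, Polynomial.eval_pow, Polynomial.eval_X,
      Polynomial.eval_C] at hcd
    have hsum : (g : F) = c ^ 2 + d ^ 2 := by linear_combination -hcd
    have hc0 : c ≠ 0 := by
      intro h; rw [h] at hsum; exact hnsq d (by simpa using hsum)
    have hd0 : d ≠ 0 := by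
      intro h; rw [h] at hsum; exact hnsq c (by simpa using hsum)
    set cu : Fˣ := Units.mk0 c hc0 with hcu
    set du : Fˣ := Units.mk0 d hd0 with hdu
    obtain ⟨sℤ, hs⟩ := Subgroup.mem_zpowers_iff.mp (hg cu)
    obtain ⟨tℤ, ht⟩ := Subgroup.mem_zpowers_iff.mp (hg du)
    set u : Fˣ := cu ^ 2 * g⁻¹ with hu
    set v : Fˣ := du ^ 2 * g⁻¹ with hv
    have huv : (u : F) + (v : F) = 1 := by
      have hgne : (g : F) ≠ 0 := Units.ne_zero g
      rw [hu, hv]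
      simp only [Units.val_mul, Units.val_pow_eq_pow_val, Units.val_inv_eq_inv_val,
        hcu, hdu, Units.val_mk0]
      field_simp
      linear_combination hcd
    have hst : s2 x i j u v = 0 := s2_steinberg x i j hij u v huv
    have huz : u = g ^ (2 * sℤ - 1 : ℤ) := by
      rw [hu, ← hs]; group
    have hvz : v = g ^ (2 * tℤ - 1 : ℤ) := by
      rw [hv, ← ht]; group
    rw [huz, hvz, s2_zpow_left x i j hij, s2_zpow_right x i j hij, smul_smul] at hst
    -- now hst : ((2s-1)*(2t-1)) • S = 0 and S + S = 0
    have h2 : (2 : ℤ) • S = 0 := by rw [two_smul]; exact h2S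
    have hodd : Odd ((2 * sℤ - 1) * (2 * tℤ - 1)) :=
      ⟨2 * sℤ * tℤ - sℤ - tℤ, by ring⟩
    obtain ⟨m', hm'⟩ := hodd
    rw [hm'] at hst
    have e : ((2 * m' + 1) : ℤ) • S = m' • ((2 : ℤ) • S) + S := by
      rw [add_smul, one_smul, mul_comm, mul_smul]
    rw [e, h2, smul_zero, zero_add] at hst
    exact hst

open MilnorKAux in
/-- Let `F` be a finite field. Then the Milnor K-group `K^M_n(F)` is trivial
for all `n ≥ 2`. -/
theorem milnorK_finite_field_trivial (F : Type*) [Field F] [Finite F]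
    (n : ℕ) (hn : 2 ≤ n) :
    ∀ ξ : MilnorK F n, ξ = 0 := by
  classical
  haveI : Fintype F := Fintype.ofFinite F
  obtain ⟨g, hg⟩ := IsCyclic.exists_generator (α := Fˣ)
  set i : Fin n := ⟨0, by omega⟩ with hi
  set j : Fin n := ⟨1, by omega⟩ with hj
  have hij : i ≠ j := Fin.ne_of_val_ne (by norm_num)
  have hsym : ∀ y : Fin n → Fˣ, MilnorK.symbol y = 0 := by
    intro y
    have hS : s2 y i j g g = 0 := s2_gen_zero y i j hij g hg
    obtain ⟨a, ha⟩ := Subgroup.mem_zpowers_iff.mp (hg (y i))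
    obtain ⟨b, hb⟩ := Subgroup.mem_zpowers_iff.mp (hg (y j))
    have hy : MilnorK.symbol y = s2 y i j (y i) (y j) := by
      unfold MilnorKAux.s2
      rw [Function.update_eq_self, Function.update_eq_self]
    rw [hy, ← ha, ← hb, s2_zpow_left y i j hij, s2_zpow_right y i j hij, hS]
    simp
  intro ξ
  obtain ⟨z, rfl⟩ := QuotientAddGroup.mk_surjective (s := MilnorRel F n) ξ
  refine FreeAbelianGroup.induction_on z ?_ ?_ ?_ ?_
  · rfl
  · intro y; exact hsym y
  · intro y hy
    have h' : (QuotientAddGroup.mk (-of y) : MilnorK F n) = -(QuotientAddGroup.mk (of y)) := rfl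
    rw [h', hy]; exact neg_zero
  · intro p q hp hq
    have h' : (QuotientAddGroup.mk (p + q) : MilnorK F n) =
        QuotientAddGroup.mk p + QuotientAddGroup.mk q := rfl
    rw [h', hp, hq]; exact add_zero _
end

section
/- Let O be a discrete valuation ring with fraction field F and uniformizer π. For n ≥ 1, the Milnor K-group K^M_n(F) is generated as an abelian group by symbols of the form {π, u_2, …, u_n} and {u_1, …, u_n} with all u_i ∈ O^×. -/
open FreeAbelianGroup

open Function

section Lemmas

variable {A : Type*} [CommRing A] {n : ℕ}

theorem MilnorK.symbol_update_mul (x : Fin n → Aˣ) (i : Fin n) (a b : Aˣ) :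
    MilnorK.symbol (update x i (a * b)) =
      MilnorK.symbol (update x i a) + MilnorK.symbol (update x i b) := by
  have h : of (update x i (a*b)) - of (update x i a) - of (update x i b) ∈ MilnorRel A n :=
    AddSubgroup.subset_closure (Or.inl ⟨x, i, a, b, rfl⟩)
  have h2 : MilnorK.symbol (update x i (a*b)) - MilnorK.symbol (update x i a)
      - MilnorK.symbol (update x i b) = 0 := by
    have h3 := (QuotientAddGroup.eq_zero_iff _).2 h
    simp only [QuotientAddGroup.mk_sub] at h3
    exact h3
  rw [sub_sub, sub_eq_zero] at h2
  exact h2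

theorem MilnorK.symbol_steinberg (x : Fin n → Aˣ) (i j : Fin n) (hij : i ≠ j)
    (h : (x i : A) + (x j : A) = 1) : MilnorK.symbol x = 0 := by
  have hm : of x ∈ MilnorRel A n :=
    AddSubgroup.subset_closure (Or.inr ⟨x, ⟨i, j, hij, h⟩, rfl⟩)
  exact (QuotientAddGroup.eq_zero_iff _).2 hm

theorem MilnorK.symbol_update_one (x : Fin n → Aˣ) (i : Fin n) :
    MilnorK.symbol (update x i 1) = 0 := by
  have := MilnorK.symbol_update_mul x i 1 1
  rw [one_mul] at this
  exact (left_eq_add.mp this)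

theorem MilnorK.symbol_update_zpow (x : Fin n → Aˣ) (i : Fin n) (a : Aˣ) (k : ℤ) :
    MilnorK.symbol (update x i (a ^ k)) = k • MilnorK.symbol (update x i a) := by
  let f : Aˣ →* Multiplicative (MilnorK A n) :=
    { toFun := fun b => Multiplicative.ofAdd (MilnorK.symbol (update x i b))
      map_one' := by simpa using congrArg Multiplicative.ofAdd (MilnorK.symbol_update_one x i)
      map_mul' := fun a b => by
        simpa using congrArg Multiplicative.ofAdd (MilnorK.symbol_update_mul x i a b) }
  have := map_zpow f a k
  have h2 := congrArg Multiplicative.toAdd this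
  simpa [f, toAdd_zpow] using h2

theorem MilnorK.symbol_update_inv (x : Fin n → Aˣ) (i : Fin n) (a : Aˣ) :
    MilnorK.symbol (update x i a⁻¹) = - MilnorK.symbol (update x i a) := by
  have := MilnorK.symbol_update_zpow x i a (-1)
  simpa using this

end Lemmas

section FieldLemmas

variable {F : Type*} [Field F] {n : ℕ}

theorem MilnorK.symbol_neg_slot (x : Fin n → Fˣ) (i j : Fin n) (hij : i ≠ j)
    (h : x j = - x i) : MilnorK.symbol x = 0 := by
  by_cases ha : x i = 1
  · have hx : x = update x i 1 := by rw [← ha, update_eq_self]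
    rw [hx]
    exact MilnorK.symbol_update_one x i
  · set a := x i with hai
    have ha0 : (a : F) ≠ 0 := a.ne_zero
    have h1 : (1 : F) - (a : F) ≠ 0 := sub_ne_zero.2 fun hh => ha (Units.ext hh.symm)
    have h2 : (1 : F) - (a : F)⁻¹ ≠ 0 := by
      refine sub_ne_zero.2 fun hh => ha (Units.ext ?_)
      have h4 : (a : F)⁻¹ = 1 := hh.symm
      rw [inv_eq_one] at h4
      simpa using h4
    set b : Fˣ := Units.mk0 _ h1 with hb
    set b' : Fˣ := Units.mk0 _ h2 with hb'
    have key : x j = b * b'⁻¹ := by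
      refine Units.ext ?_
      rw [Units.val_mul, Units.val_inv_eq_inv_val, hb, hb', Units.val_mk0, Units.val_mk0,
        h, Units.val_neg, eq_mul_inv_iff_mul_eq₀ h2]
      field_simp
      ring
    have expand : MilnorK.symbol x =
        MilnorK.symbol (update x j b) + MilnorK.symbol (update x j b'⁻¹) := by
      conv_lhs => rw [← update_eq_self j x, key]
      exact MilnorK.symbol_update_mul x j b b'⁻¹
    have t1 : MilnorK.symbol (update x j b) = 0 := by
      refine MilnorK.symbol_steinberg _ i j hij ?_
      rw [update_of_ne hij, update_self]
      simp [hb, ← hai]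
    have t2 : MilnorK.symbol (update x j b') = 0 := by
      set y := update x j b' with hy
      have hyi : y i = a := by rw [hy, update_of_ne hij]
      have hyy : y = update y i ((a⁻¹)⁻¹) := by rw [inv_inv, ← hyi, update_eq_self]
      rw [hyy, MilnorK.symbol_update_inv]
      have hz : MilnorK.symbol (update y i a⁻¹) = 0 := by
        refine MilnorK.symbol_steinberg _ i j hij ?_
        rw [update_self, update_of_ne (Ne.symm hij), hy, update_self]
        rw [Units.val_inv_eq_inv_val]
        simp [hb']
      rw [hz, neg_zero]
    rw [expand, t1, MilnorK.symbol_update_inv, t2, neg_zero, zero_add]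

theorem MilnorK.symbol_swap (x : Fin n → Fˣ) (i j : Fin n) (hij : i ≠ j) :
    MilnorK.symbol x = - MilnorK.symbol (update (update x i (x j)) j (x i)) := by
  set a := x i with hai
  set b := x j with hbj
  set x' := update x j (-(a * b)) with hx'
  have hz : MilnorK.symbol (update x' i (a * b)) = 0 := by
    refine MilnorK.symbol_neg_slot _ i j hij ?_
    rw [update_self, update_of_ne (Ne.symm hij), hx', update_self]
  have e1 : MilnorK.symbol (update x' i (a * b)) =
      MilnorK.symbol (update x' i a) + MilnorK.symbol (update x' i b) :=
    MilnorK.symbol_update_mul x' i a b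
  have c1 : update x' i a = update (update x i a) j (-(a * b)) := by
    rw [hx', update_comm (Ne.symm hij)]
  have c2 : update x' i b = update (update x i b) j (-(a * b)) := by
    rw [hx', update_comm (Ne.symm hij)]
  have e2 : MilnorK.symbol (update x' i a) = MilnorK.symbol x := by
    rw [c1]
    have hm : (-(a * b)) = (-a) * b := by rw [neg_mul]
    rw [hm, MilnorK.symbol_update_mul]
    have z1 : MilnorK.symbol (update (update x i a) j (-a)) = 0 := by
      refine MilnorK.symbol_neg_slot _ i j hij ?_
      rw [update_self, update_of_ne hij, update_self]
    rw [z1, zero_add, hai, update_eq_self, hbj, update_eq_self]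
  have e3 : MilnorK.symbol (update x' i b) =
      MilnorK.symbol (update (update x i b) j a) := by
    rw [c2]
    have hm : (-(a * b)) = a * (-b) := by rw [mul_neg]
    rw [hm, MilnorK.symbol_update_mul]
    have z2 : MilnorK.symbol (update (update x i b) j (-b)) = 0 := by
      refine MilnorK.symbol_neg_slot _ i j hij ?_
      rw [update_self, update_of_ne hij, update_self]
    rw [z2, add_zero]
  rw [e2, e3, hz] at e1
  exact eq_neg_of_add_eq_zero_left e1.symm

theorem MilnorK.symbol_diag (x : Fin n → Fˣ) (i j : Fin n) (hij : i ≠ j)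
    (h : x j = x i) : MilnorK.symbol x = - MilnorK.symbol (update x j (-1)) := by
  have h0 : MilnorK.symbol (update x j (-(x i))) = 0 := by
    refine MilnorK.symbol_neg_slot _ i j hij ?_
    rw [update_self, update_of_ne hij]
  have hm : (-(x i)) = (-1) * (x i) := by rw [neg_one_mul]
  rw [hm, MilnorK.symbol_update_mul, ← h, update_eq_self] at h0
  rw [add_comm] at h0
  exact eq_neg_of_add_eq_zero_left h0

end FieldLemmas

section Aux

theorem milnor_aux {F : Type*} [Field F] {n : ℕ} (p : Fˣ) (U : Subgroup Fˣ)
    (hneg : (-1 : Fˣ) ∈ U)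
    (hdec : ∀ g : Fˣ, ∃ u ∈ U, ∃ k : ℤ, g = u * p ^ k)
    (i0 : Fin n) (C : AddSubgroup (MilnorK F n))
    (hgen1 : ∀ x : Fin n → Fˣ, (∀ i, x i ∈ U) → MilnorK.symbol x ∈ C)
    (hgen2 : ∀ x : Fin n → Fˣ, x i0 = p → (∀ i, i ≠ i0 → x i ∈ U) →
      MilnorK.symbol x ∈ C) :
    ∀ x : Fin n → Fˣ, MilnorK.symbol x ∈ C := by
  classical
  have hB : ∀ (x : Fin n → Fˣ) (i : Fin n), x i = p → (∀ j, j ≠ i → x j ∈ U) →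
      MilnorK.symbol x ∈ C := by
    intro x i hxi hgood
    by_cases hi : i = i0
    · exact hgen2 x (hi ▸ hxi) fun j hj => hgood j (by rw [hi]; exact hj)
    · have hswap := MilnorK.symbol_swap x i0 i (fun h => hi h.symm)
      rw [hswap]
      refine neg_mem (hgen2 _ ?_ ?_)
      · rw [update_of_ne (Ne.symm hi), update_self, hxi]
      · intro j hj
        by_cases hji : j = i
        · subst hji; rw [update_self]; exact hgood i0 (Ne.symm hi)
        · rw [update_of_ne hji, update_of_ne hj]; exact hgood j hji
  have claimR : ∀ (m : ℕ) (Sb : Finset (Fin n)) (x : Fin n → Fˣ) (i : Fin n),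
      Sb.card ≤ m → x i = p → i ∉ Sb → (∀ j, j ∉ Sb → j ≠ i → x j ∈ U) →
      MilnorK.symbol x ∈ C := by
    intro m
    induction m with
    | zero =>
      intro Sb x i hcard hxi _ hgood
      have hS : Sb = ∅ := Finset.card_eq_zero.mp (Nat.le_zero.mp hcard)
      exact hB x i hxi fun j hj => hgood j (by simp [hS]) hj
    | succ m ih =>
      intro Sb x i hcard hxi hiS hgood
      rcases Finset.eq_empty_or_nonempty Sb with hS | ⟨j, hj⟩
      · exact hB x i hxi fun l hl => hgood l (by simp [hS]) hl
      · have hji : j ≠ i := fun h => hiS (h ▸ hj)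
        obtain ⟨u, hu, k, huk⟩ := hdec (x j)
        have hx : x = update x j (u * p ^ k) := by rw [← huk, update_eq_self]
        have e : MilnorK.symbol x =
            MilnorK.symbol (update x j u) + k • MilnorK.symbol (update x j p) := by
          conv_lhs => rw [hx]
          rw [MilnorK.symbol_update_mul, MilnorK.symbol_update_zpow]
        rw [e]
        have hcard' : (Sb.erase j).card ≤ m := by
          have := Finset.card_erase_of_mem hj
          omega
        refine add_mem ?_ (zsmul_mem ?_ k)
        · refine ih (Sb.erase j) _ i hcard' ?_
            (fun h => hiS (Finset.mem_of_mem_erase h)) ?_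
          · rw [update_of_ne (Ne.symm hji)]; exact hxi
          · intro l hl hli
            by_cases hlj : l = j
            · subst hlj; rw [update_self]; exact hu
            · rw [update_of_ne hlj]
              exact hgood l (fun h => hl (Finset.mem_erase.mpr ⟨hlj, h⟩)) hli
        · set y := update x j p with hy
          have hdiag : MilnorK.symbol y = - MilnorK.symbol (update y j (-1)) := by
            refine MilnorK.symbol_diag y i j (Ne.symm hji) ?_
            rw [hy, update_self, update_of_ne (Ne.symm hji), hxi]
          rw [hdiag]
          refine neg_mem ?_
          refine ih (Sb.erase j) _ i hcard' ?_
            (fun h => hiS (Finset.mem_of_mem_erase h)) ?_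
          · rw [update_of_ne (Ne.symm hji), hy, update_of_ne (Ne.symm hji)]
            exact hxi
          · intro l hl hli
            by_cases hlj : l = j
            · subst hlj; rw [update_self]; exact hneg
            · rw [update_of_ne hlj, hy, update_of_ne hlj]
              exact hgood l (fun h => hl (Finset.mem_erase.mpr ⟨hlj, h⟩)) hli
  have claimM : ∀ (m : ℕ) (Sb : Finset (Fin n)) (x : Fin n → Fˣ),
      Sb.card ≤ m → (∀ j, j ∉ Sb → x j ∈ U) → MilnorK.symbol x ∈ C := by
    intro m
    induction m with
    | zero =>
      intro Sb x hcard hgood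
      have hS : Sb = ∅ := Finset.card_eq_zero.mp (Nat.le_zero.mp hcard)
      exact hgen1 x fun j => hgood j (by simp [hS])
    | succ m ih =>
      intro Sb x hcard hgood
      rcases Finset.eq_empty_or_nonempty Sb with hS | ⟨j, hj⟩
      · exact hgen1 x fun l => hgood l (by simp [hS])
      · obtain ⟨u, hu, k, huk⟩ := hdec (x j)
        have hx : x = update x j (u * p ^ k) := by rw [← huk, update_eq_self]
        have e : MilnorK.symbol x =
            MilnorK.symbol (update x j u) + k • MilnorK.symbol (update x j p) := by
          conv_lhs => rw [hx]
          rw [MilnorK.symbol_update_mul, MilnorK.symbol_update_zpow]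
        rw [e]
        have hcard' : (Sb.erase j).card ≤ m := by
          have := Finset.card_erase_of_mem hj
          omega
        refine add_mem ?_ (zsmul_mem ?_ k)
        · refine ih (Sb.erase j) _ hcard' ?_
          intro l hl
          by_cases hlj : l = j
          · subst hlj; rw [update_self]; exact hu
          · rw [update_of_ne hlj]
            exact hgood l (fun h => hl (Finset.mem_erase.mpr ⟨hlj, h⟩))
        · refine claimR (Sb.erase j).card (Sb.erase j) _ j le_rfl
            (update_self j p x) (Finset.notMem_erase j Sb) ?_
          intro l hl hlj
          rw [update_of_ne hlj]
          exact hgood l (fun h => hl (Finset.mem_erase.mpr ⟨hlj, h⟩))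
  intro x
  exact claimM n Finset.univ x (by simp) fun j hj => absurd (Finset.mem_univ j) hj

theorem milnor_eq_top {A : Type*} [CommRing A] {n : ℕ} (C : AddSubgroup (MilnorK A n))
    (h : ∀ x : Fin n → Aˣ, MilnorK.symbol x ∈ C) : C = ⊤ := by
  rw [AddSubgroup.eq_top_iff']
  intro ξ
  obtain ⟨r, rfl⟩ := QuotientAddGroup.mk_surjective (s := MilnorRel A n) ξ
  refine FreeAbelianGroup.induction_on r ?_ ?_ ?_ ?_
  · exact zero_mem C
  · exact fun x => h x
  · intro x hx
    have : ((-FreeAbelianGroup.of x : FreeAbelianGroup (Fin n → Aˣ)) :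
        FreeAbelianGroup (Fin n → Aˣ) ⧸ MilnorRel A n) =
        -((FreeAbelianGroup.of x : FreeAbelianGroup (Fin n → Aˣ)) :
          FreeAbelianGroup (Fin n → Aˣ) ⧸ MilnorRel A n) := by
      simp
    rw [this]
    exact neg_mem hx
  · intro a b ha hb
    have : ((a + b : FreeAbelianGroup (Fin n → Aˣ)) :
        FreeAbelianGroup (Fin n → Aˣ) ⧸ MilnorRel A n) =
        (a : FreeAbelianGroup (Fin n → Aˣ) ⧸ MilnorRel A n) + b := by
      simp
    rw [this]
    exact add_mem ha hb

end Aux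


/-- Let `O` be a discrete valuation ring with fraction field `F` and
uniformizer `π`. For `n ≥ 1`, the Milnor K-group `K^M_n(F)` is generated as an abelian
group by the symbols `{π, u₂, …, uₙ}` and `{u₁, …, uₙ}` with all `uᵢ ∈ O^×`. -/
theorem milnorK_dvr_generators
    (O : Type*) [CommRing O] [IsDomain O] [IsDiscreteValuationRing O]
    (π : O) (hπ : Irreducible π) (n : ℕ) (hn : 1 ≤ n) :
    AddSubgroup.closure
      ({ξ | ∃ v : Fin n → (FractionRing O)ˣ,
          (∀ i, ∃ u : Oˣ, (v i : FractionRing O) = algebraMap O (FractionRing O) u) ∧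
          ξ = MilnorK.symbol v} ∪
       {ξ | ∃ v : Fin n → (FractionRing O)ˣ,
          ((v ⟨0, hn⟩ : FractionRing O) = algebraMap O (FractionRing O) π ∧
            ∀ i, i ≠ ⟨0, hn⟩ →
              ∃ u : Oˣ, (v i : FractionRing O) = algebraMap O (FractionRing O) u) ∧
          ξ = MilnorK.symbol v}) = (⊤ : AddSubgroup (MilnorK (FractionRing O) n)) := by
  classical
  refine milnor_eq_top _ ?_
  have hinj := IsFractionRing.injective O (FractionRing O)
  have hπF : algebraMap O (FractionRing O) π ≠ 0 := fun h =>
    hπ.ne_zero (hinj (by simpa using h))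
  set p : (FractionRing O)ˣ := Units.mk0 _ hπF with hp
  set ι : Oˣ →* (FractionRing O)ˣ :=
    Units.map (algebraMap O (FractionRing O)).toMonoidHom with hι
  have hval : ∀ w : Oˣ,
      ((ι w : (FractionRing O)ˣ) : FractionRing O) = algebraMap O (FractionRing O) (w : O) :=
    fun w => rfl
  have hneg : (-1 : (FractionRing O)ˣ) ∈ ι.range := by
    refine ⟨-1, Units.ext ?_⟩
    rw [hval]
    simp
  have hdec : ∀ g : (FractionRing O)ˣ, ∃ u ∈ ι.range, ∃ k : ℤ, g = u * p ^ k := by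
    intro g
    obtain ⟨a, s, hs, hg⟩ := IsFractionRing.div_surjective (A := O) (g : FractionRing O)
    have hs0 : s ≠ 0 := nonZeroDivisors.ne_zero hs
    have ha : a ≠ 0 := by
      intro h0
      apply g.ne_zero
      rw [← hg, h0, map_zero, zero_div]
    obtain ⟨m, u1, hu1⟩ := IsDiscreteValuationRing.eq_unit_mul_pow_irreducible ha hπ
    obtain ⟨l, u2, hu2⟩ := IsDiscreteValuationRing.eq_unit_mul_pow_irreducible hs0 hπ
    refine ⟨ι (u1 * u2⁻¹), ⟨_, rfl⟩, (m : ℤ) - l, Units.ext ?_⟩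
    have hu2F : algebraMap O (FractionRing O) (u2 : O) ≠ 0 := fun h =>
      u2.ne_zero (hinj (by simpa using h))
    rw [Units.val_mul, Units.val_zpow_eq_zpow_val, hval, ← hg, hu1, hu2]
    rw [map_mul, map_mul, map_pow, map_pow, Units.val_mul]
    rw [map_mul]
    have hinv : algebraMap O (FractionRing O) ((u2⁻¹ : Oˣ) : O) =
        (algebraMap O (FractionRing O) (u2 : O))⁻¹ := by
      refine eq_inv_of_mul_eq_one_left ?_
      rw [← map_mul]
      simp
    rw [hinv, hp, Units.val_mk0, zpow_sub₀ hπF, zpow_natCast, zpow_natCast]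
    field_simp
  refine milnor_aux p ι.range hneg hdec ⟨0, hn⟩ _ ?_ ?_
  · intro x hx
    refine AddSubgroup.subset_closure (Or.inl ⟨x, fun i => ?_, rfl⟩)
    obtain ⟨u, hu⟩ := hx i
    exact ⟨u, by rw [← hu, hval]⟩
  · intro x hx0 hx
    refine AddSubgroup.subset_closure (Or.inr ⟨x, ⟨?_, fun i hi => ?_⟩, rfl⟩)
    · rw [hx0, hp, Units.val_mk0]
    · obtain ⟨u, hu⟩ := hx i hi
      exact ⟨u, by rw [← hu, hval]⟩
end
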